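/- Let χ₁ mod r₁, χ₂ mod r₂ be primitive characters, q₀ = [r₁,r₂], and let b(q) = φ(q)^{-2} c_{χ₁χ₂χ_{0,q}}(-m) τ(conj(χ₁)χ_{0,q}) τ(conj(χ₂)χ_{0,q}). If b(q₀t) ≠ 0 for some positive integer t, then t is squarefree, (t, q₀) = 1, and writing t = hk with h the product of primes dividing m and k the product of primes not dividing m, b(q₀t) = b(q₀)·μ(k)/(φ(k)²·φ(h)). -/

import Mathlib

open Complex

/-- e(u) = e^{2πiu}. -/
noncomputable def e (u : ℝ) : ℂ := Complex.exp (2 * Real.pi * Complex.I * u)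

/-- b(q) = φ(q)^{-2} c_{χ₁χ₂χ_{0,q}}(-m) τ(conj(χ₁)χ_{0,q}) τ(conj(χ₂)χ_{0,q}),
written out explicitly via the values of the characters involved. -/
noncomputable def bTerm {r₁ r₂ : ℕ} (χ₁ : DirichletCharacter ℂ r₁)
    (χ₂ : DirichletCharacter ℂ r₂) (m : ℤ) (q : ℕ) : ℂ :=
  (1 / ((Nat.totient q : ℂ)) ^ 2) *
    (∑ h ∈ Finset.range q,
      (if Nat.Coprime h q then χ₁ (h : ZMod r₁) * χ₂ (h : ZMod r₂) else 0) *
        e ((h : ℝ) * (-(m : ℝ)) / q)) *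
    (∑ h ∈ Finset.range q,
      (if Nat.Coprime h q then (starRingEnd ℂ) (χ₁ (h : ZMod r₁)) else 0) *
        e ((h : ℝ) / q)) *
    (∑ h ∈ Finset.range q,
      (if Nat.Coprime h q then (starRingEnd ℂ) (χ₂ (h : ZMod r₂)) else 0) *
        e ((h : ℝ) / q))

/-!
If a prime `p` divides `t` and `p² ∣ q₀t`, the Gauss sum `τ(χ̄₁χ_{0,q₀t})` vanishes: writing
`h = x + (q₀t/p)y`, the summand only picks up the factor `e(y/p)`, whose sum over `y` is zero.
Hence `t` is squarefree and coprime to `q₀`. For `(a, b) = 1` the parametrisation `h = xb + ya`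
factors each of the three sums mod `ab` into the value of the character at `b`, the sum mod `a`
and the Ramanujan sum `c_b`. The character values at `t` cancel against their conjugates, and for
squarefree `t` one has `c_t(c) = φ(∏_{p ∣ (t,c)} p) μ(∏_{p ∣ t, p ∤ c} p)`.
-/

open Finset Function ComplexConjugate

lemma e_add (u v : ℝ) : e (u + v) = e u * e v := by
  rw [e, e, e, ← Complex.exp_add]
  push_cast
  ring_nf

lemma e_intCast (k : ℤ) : e k = 1 := by
  rw [e, Complex.exp_eq_one_iff]
  exact ⟨k, by push_cast; ring⟩

lemma e_add_intCast (u : ℝ) (k : ℤ) : e (u + k) = e u := by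
  rw [e_add, e_intCast, mul_one]

lemma e_nat_mul (n : ℕ) (u : ℝ) : e (n * u) = e u ^ n := by
  rw [e, e, ← Complex.exp_nat_mul]
  push_cast
  ring_nf

lemma e_eq_one_iff (u : ℝ) : e u = 1 ↔ ∃ k : ℤ, u = k := by
  rw [e, Complex.exp_eq_one_iff]
  refine exists_congr fun k => ⟨fun h => ?_, fun h => by rw [h]; push_cast; ring⟩
  have hπ : 2 * (Real.pi : ℂ) * I ≠ 0 := by simp [Real.pi_ne_zero]
  exact_mod_cast mul_left_cancel₀ hπ (h.trans (mul_comm _ _))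

lemma sum_range_e_of_not_dvd {q : ℕ} {d : ℤ} (hd : ¬ (q : ℤ) ∣ d) :
    ∑ k ∈ range q, e (k * d / q) = 0 := by
  rcases eq_or_ne q 0 with rfl | hq
  · simp
  replace hq : (q : ℝ) ≠ 0 := by exact_mod_cast hq
  have hζ : e (d / q) ≠ 1 := by
    rw [Ne, e_eq_one_iff]
    rintro ⟨k, hk⟩
    exact hd ⟨k, by rw [div_eq_iff hq] at hk; exact_mod_cast hk.trans (mul_comm _ _)⟩
  have hζq : e (d / q) ^ q = 1 := by
    rw [← e_nat_mul, mul_div_cancel₀ _ hq, e_intCast]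
  simp_rw [mul_div_assoc, e_nat_mul]
  rw [geom_sum_eq hζ, hζq, sub_self, zero_div]

lemma sum_range_e_of_dvd {q : ℕ} {d : ℤ} (hd : (q : ℤ) ∣ d) :
    ∑ k ∈ range q, e (k * d / q) = q := by
  obtain ⟨j, rfl⟩ := hd
  rcases eq_or_ne q 0 with rfl | hq
  · simp
  have hterm : ∀ k : ℕ, e (k * ((q * j : ℤ) : ℝ) / q) = 1 := fun k => by
    rw [show (k : ℝ) * ((q * j : ℤ) : ℝ) / q = ((k * j : ℤ) : ℝ) by push_cast; field_simp,
      e_intCast]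
  rw [sum_congr rfl fun k _ => hterm k]
  simp

theorem sum_range_mul_eq_sum_sum {M : Type*} [AddCommMonoid M] (s p : ℕ) (f : ℕ → M) :
    ∑ h ∈ range (s * p), f h = ∑ y ∈ range p, ∑ x ∈ range s, f (s * y + x) := by
  induction p with
  | zero => simp
  | succ p ih => rw [mul_add_one, sum_range_add, ih, sum_range_succ]

theorem sum_range_mul_eq_sum_sum_of_coprime {M : Type*} [AddCommMonoid M] {a b : ℕ}
    (hab : a.Coprime b) {f : ℕ → M} (hf : Periodic f (a * b)) :
    ∑ h ∈ range (a * b), f h = ∑ x ∈ range a, ∑ y ∈ range b, f (x * b + y * a) := by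
  rw [← sum_product']
  symm
  have hmod_a : ∀ x y, x * b + y * a ≡ x * b [MOD a] := fun x y => by
    simp [Nat.ModEq, Nat.add_mul_mod_self_right]
  have hmod_b : ∀ x y, x * b + y * a ≡ y * a [MOD b] := fun x y => by
    simp [Nat.ModEq]
  have hinj :
      Set.InjOn (fun z : ℕ × ℕ => (z.1 * b + z.2 * a) % (a * b)) ↑(range a ×ˢ range b) := by
    rintro ⟨x, y⟩ hxy ⟨x', y'⟩ hxy' heq
    simp only [coe_product, coe_range, Set.mem_prod, Set.mem_Iio] at hxy hxy'
    have h : x * b + y * a ≡ x' * b + y' * a [MOD a * b] := heq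
    have hx : x ≡ x' [MOD a] := Nat.ModEq.cancel_right_of_coprime hab
      (((hmod_a x y).symm.trans (h.of_mul_right b)).trans (hmod_a x' y'))
    have hy : y ≡ y' [MOD b] := Nat.ModEq.cancel_right_of_coprime hab.symm
      (((hmod_b x y).symm.trans (h.of_mul_left a)).trans (hmod_b x' y'))
    rw [hx.eq_of_lt_of_lt hxy.1 hxy'.1, hy.eq_of_lt_of_lt hxy.2 hxy'.2]
  have hmaps : ∀ z ∈ range a ×ˢ range b, (z.1 * b + z.2 * a) % (a * b) ∈ range (a * b) := by
    intro z hz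
    obtain ⟨hx, hy⟩ := mem_product.mp hz
    exact mem_range.mpr (Nat.mod_lt _ (Nat.mul_pos (Nat.zero_lt_of_lt (mem_range.mp hx))
      (Nat.zero_lt_of_lt (mem_range.mp hy))))
  refine sum_nbij _ hmaps hinj
    (surjOn_of_injOn_of_card_le _ hmaps hinj (by simp)) fun z _ => (hf.map_mod_nat _).symm

/-- `∑_{h mod q, (h,q)=1} F(h) e(hc/q)`: the sum `c_ψ(c)` of the paper when `F` is a character
`ψ` mod `q`. -/
noncomputable def expSum (q : ℕ) (F : ℕ → ℂ) (c : ℤ) : ℂ :=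
  ∑ h ∈ range q, (if h.Coprime q then F h else 0) * e (h * c / q)

lemma periodic_expSum_summand {q : ℕ} {F : ℕ → ℂ} (hF : Periodic F q) (c : ℤ) :
    Periodic (fun h : ℕ => (if h.Coprime q then F h else 0) * e (h * c / q)) q := by
  rcases eq_or_ne q 0 with rfl | hq
  · simp
  intro h
  have hq' : (q : ℝ) ≠ 0 := by exact_mod_cast hq
  have harg : ((h + q : ℕ) : ℝ) * c / q = h * c / q + c := by
    push_cast; field_simp
  simp only [Nat.coprime_add_self_left, hF h, harg, e_add_intCast]

theorem expSum_mul {a b : ℕ} (hab : a.Coprime b) (F : ℕ →* ℂ) (hF : Periodic F a) (c : ℤ) :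
    expSum (a * b) F c = F b * expSum a F c * expSum b 1 c := by
  have hFab : Periodic F (a * b) := by simpa [mul_comm] using hF.nat_mul b
  rw [expSum, sum_range_mul_eq_sum_sum_of_coprime hab (periodic_expSum_summand hFab c),
    expSum, expSum, mul_assoc, sum_mul_sum, mul_sum]
  refine sum_congr rfl fun x hx => ?_
  rw [mul_sum]
  refine sum_congr rfl fun y hy => ?_
  have ha : (a : ℝ) ≠ 0 := by exact_mod_cast (Nat.zero_lt_of_lt (mem_range.mp hx)).ne'
  have hb : (b : ℝ) ≠ 0 := by exact_mod_cast (Nat.zero_lt_of_lt (mem_range.mp hy)).ne'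
  have hcop : (x * b + y * a).Coprime (a * b) ↔ x.Coprime a ∧ y.Coprime b := by
    rw [Nat.coprime_mul_iff_right, Nat.coprime_add_mul_right_left, add_comm,
      Nat.coprime_add_mul_right_left, Nat.coprime_mul_iff_left, Nat.coprime_mul_iff_left,
      and_iff_left hab.symm, and_iff_left hab]
  have hFval : F (x * b + y * a) = F x * F b := by
    rw [← map_mul]
    simpa using hF.nat_mul y (x * b)
  have he : e ((x * b + y * a : ℕ) * c / (a * b : ℕ)) = e (x * c / a) * e (y * c / b) := by
    rw [← e_add]; push_cast; field_simp
  rw [he, hFval]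
  simp only [hcop, ite_and, Pi.one_apply]
  split_ifs <;> ring

lemma coprime_mul_iff_of_dvd {k s p : ℕ} (hps : p ∣ s) : k.Coprime (s * p) ↔ k.Coprime s :=
  Nat.coprime_mul_iff_right.trans (and_iff_left_of_imp fun h => h.coprime_dvd_right hps)

theorem expSum_mul_prime_eq_zero {s p : ℕ} (hp : p.Prime) (hps : p ∣ s) {F : ℕ → ℂ}
    (hF : Periodic F s) {c : ℤ} (hc : ¬ (p : ℤ) ∣ c) : expSum (s * p) F c = 0 := by
  rcases eq_or_ne s 0 with rfl | hs
  · simp [expSum]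
  have hs' : (s : ℝ) ≠ 0 := by exact_mod_cast hs
  have hp' : (p : ℝ) ≠ 0 := by exact_mod_cast hp.ne_zero
  rw [expSum, sum_range_mul_eq_sum_sum, sum_comm]
  refine sum_eq_zero fun x _ => ?_
  have hterm : ∀ y : ℕ, (if (s * y + x).Coprime (s * p) then F (s * y + x) else 0) *
      e ((s * y + x : ℕ) * c / (s * p : ℕ)) =
      e (y * c / p) * ((if x.Coprime (s * p) then F x else 0) * e (x * c / (s * p : ℕ))) := by
    intro y
    have he :
        e ((s * y + x : ℕ) * c / (s * p : ℕ)) = e (y * c / p) * e (x * c / (s * p : ℕ)) := by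
      rw [← e_add]; push_cast; field_simp
    have hFx : F (s * y + x) = F x := by simpa [mul_comm, add_comm] using hF.nat_mul y x
    rw [he, hFx]
    simp only [coprime_mul_iff_of_dvd hps, mul_comm s y, add_comm (y * s) x,
      Nat.coprime_add_mul_right_left]
    ring
  rw [sum_congr rfl fun y _ => hterm y, ← sum_mul, sum_range_e_of_not_dvd hc, zero_mul]

noncomputable def ramanujanSum (c : ℤ) : ArithmeticFunction ℂ :=
  ⟨fun q => expSum q 1 c, by simp [expSum]⟩

lemma ramanujanSum_apply (c : ℤ) (q : ℕ) : ramanujanSum c q = expSum q 1 c := rfl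

lemma isMultiplicative_ramanujanSum (c : ℤ) : (ramanujanSum c).IsMultiplicative := by
  refine ⟨by simp [ramanujanSum_apply, expSum, e], fun {a b} hab => ?_⟩
  have h := expSum_mul hab 1 (fun _ => rfl) c
  rw [MonoidHom.one_apply, one_mul] at h
  exact h

lemma ramanujanSum_prime {p : ℕ} (hp : p.Prime) (c : ℤ) :
    ramanujanSum c p =
      if (p : ℤ) ∣ c then (p.totient : ℂ) else (ArithmeticFunction.moebius p : ℂ) := by
  have hsum : ramanujanSum c p = ∑ h ∈ range p, e (h * c / p) - 1 := by
    obtain ⟨n, rfl⟩ : ∃ n, p = n + 1 := ⟨p - 1, (Nat.sub_add_cancel hp.one_le).symm⟩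
    have hcop : ∀ i ∈ range n, (i + 1).Coprime (n + 1) := fun i hi =>
      Nat.coprime_comm.mp <| (hp.coprime_iff_not_dvd).mpr <|
        Nat.not_dvd_of_pos_of_lt i.succ_pos (by simpa using hi)
    rw [ramanujanSum_apply, expSum, sum_range_succ', sum_range_succ',
      sum_congr rfl fun i hi => by rw [if_pos (hcop i hi), Pi.one_apply, one_mul]]
    have hn : n ≠ 0 := by rintro rfl; exact Nat.not_prime_one hp
    simp [hn, e]
  rw [hsum, Nat.totient_prime hp, ArithmeticFunction.moebius_apply_prime hp]
  split_ifs with hc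
  · rw [sum_range_e_of_dvd hc, Nat.cast_sub hp.one_le, Nat.cast_one]
  · rw [sum_range_e_of_not_dvd hc]
    norm_num

lemma totient_prod_of_prime {s : Finset ℕ} (hs : ∀ p ∈ s, p.Prime) :
    (∏ p ∈ s, p).totient = ∏ p ∈ s, p.totient :=
  (show ArithmeticFunction.IsMultiplicative ⟨Nat.totient, Nat.totient_zero⟩ from
    ⟨Nat.totient_one, Nat.totient_mul⟩).map_prod_of_prime s hs

theorem ramanujanSum_of_squarefree {t : ℕ} (ht : Squarefree t) (c : ℤ) :
    ramanujanSum c t =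
      ((∏ p ∈ t.primeFactors.filter (fun p : ℕ => (p : ℤ) ∣ c), p).totient : ℂ) *
        (ArithmeticFunction.moebius
          (∏ p ∈ t.primeFactors.filter (fun p : ℕ => ¬ (p : ℤ) ∣ c), p) : ℂ) := by
  have hprime : ∀ p ∈ t.primeFactors, p.Prime := fun p hp => Nat.prime_of_mem_primeFactors hp
  rw [← (isMultiplicative_ramanujanSum c).prod_primeFactors ht,
    prod_congr rfl fun p hp => ramanujanSum_prime (hprime p hp) c, prod_ite,
    totient_prod_of_prime fun p hp => hprime p (mem_filter.mp hp).1,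
    ArithmeticFunction.isMultiplicative_moebius.map_prod_of_subset_primeFactors t _
      (filter_subset _ _)]
  push_cast
  rfl

lemma ramanujanSum_one_of_squarefree {t : ℕ} (ht : Squarefree t) :
    ramanujanSum 1 t = ArithmeticFunction.moebius t := by
  have hnd : ∀ p ∈ t.primeFactors, ¬ (p : ℤ) ∣ 1 := fun p hp => by
    exact_mod_cast (Nat.prime_of_mem_primeFactors hp).not_dvd_one
  rw [ramanujanSum_of_squarefree ht, filter_false_of_mem hnd, filter_true_of_mem hnd, prod_empty,
    Nat.totient_one, Nat.prod_primeFactors_of_squarefree ht, Nat.cast_one, one_mul]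

lemma totient_mul_totient_of_squarefree {t : ℕ} (ht : Squarefree t) (P : ℕ → Prop)
    [DecidablePred P] :
    (∏ p ∈ t.primeFactors.filter P, p).totient *
      (∏ p ∈ t.primeFactors.filter (fun p => ¬ P p), p).totient = t.totient := by
  have hprime : ∀ p ∈ t.primeFactors, p.Prime := fun p hp => Nat.prime_of_mem_primeFactors hp
  rw [totient_prod_of_prime fun p hp => hprime p (mem_filter.mp hp).1,
    totient_prod_of_prime fun p hp => hprime p (mem_filter.mp hp).1,
    prod_filter_mul_prod_filter_not, ← totient_prod_of_prime hprime,
    Nat.prod_primeFactors_of_squarefree ht]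

namespace DirichletCharacter

variable {r : ℕ} (χ : DirichletCharacter ℂ r)

noncomputable def natHom : ℕ →* ℂ :=
  χ.toMonoidHom.comp (Nat.castRingHom (ZMod r)).toMonoidHom

@[simp] lemma natHom_apply (n : ℕ) : χ.natHom n = χ n := rfl

lemma periodic_natHom {q : ℕ} (hrq : r ∣ q) : Periodic χ.natHom q := by
  obtain ⟨k, rfl⟩ := hrq
  intro n
  simp

noncomputable def conjNatHom : ℕ →* ℂ := (starRingEnd ℂ).toMonoidHom.comp χ.natHom

@[simp] lemma conjNatHom_apply (n : ℕ) : χ.conjNatHom n = conj (χ n) := rfl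

lemma periodic_conjNatHom {q : ℕ} (hrq : r ∣ q) : Periodic χ.conjNatHom q :=
  (χ.periodic_natHom hrq).comp (starRingEnd ℂ)

lemma mul_conj_natCast {n : ℕ} (hn : n.Coprime r) : χ n * conj (χ n) = 1 := by
  rw [Complex.mul_conj', ← ZMod.coe_unitOfCoprime n hn, χ.unit_norm_eq_one]
  simp

end DirichletCharacter

section bTerm

variable {r₁ r₂ : ℕ} (χ₁ : DirichletCharacter ℂ r₁) (χ₂ : DirichletCharacter ℂ r₂) (m : ℤ)

lemma bTerm_eq_expSum (q : ℕ) :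
    bTerm χ₁ χ₂ m q = (1 / (q.totient : ℂ)) ^ 2 * expSum q ⇑(χ₁.natHom * χ₂.natHom) (-m) *
      expSum q χ₁.conjNatHom 1 * expSum q χ₂.conjNatHom 1 := by
  simp [bTerm, expSum]

theorem bTerm_mul_prime_eq_zero {s p : ℕ} (hp : p.Prime) (hps : p ∣ s) (hr₁ : r₁ ∣ s) :
    bTerm χ₁ χ₂ m (s * p) = 0 := by
  have hp1 : ¬ (p : ℤ) ∣ 1 := by exact_mod_cast hp.not_dvd_one
  rw [bTerm_eq_expSum, expSum_mul_prime_eq_zero hp hps (χ₁.periodic_conjNatHom hr₁) hp1,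
    mul_zero, zero_mul]

theorem bTerm_mul_of_coprime {q t : ℕ} (hr₁ : r₁ ∣ q) (hr₂ : r₂ ∣ q) (hqt : q.Coprime t) :
    bTerm χ₁ χ₂ m (q * t) =
      bTerm χ₁ χ₂ m q * ramanujanSum (-m) t * ramanujanSum 1 t ^ 2 / (t.totient : ℂ) ^ 2 := by
  have hper₁ := χ₁.periodic_natHom hr₁
  have hper₂ := χ₂.periodic_natHom hr₂
  have hunit : χ₁ t * χ₂ t * conj (χ₁ t) * conj (χ₂ t) = 1 := by
    linear_combination χ₂ t * conj (χ₂ t) * χ₁.mul_conj_natCast (hqt.symm.coprime_dvd_right hr₁) +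
      χ₂.mul_conj_natCast (hqt.symm.coprime_dvd_right hr₂)
  rw [bTerm_eq_expSum χ₁ χ₂ m (q * t), expSum_mul hqt _ (hper₁.mul hper₂),
    expSum_mul hqt _ (χ₁.periodic_conjNatHom hr₁), expSum_mul hqt _ (χ₂.periodic_conjNatHom hr₂)]
  linear_combination (norm := skip)
    (bTerm χ₁ χ₂ m q * ramanujanSum (-m) t * ramanujanSum 1 t ^ 2 / (t.totient : ℂ) ^ 2) * hunit
  simp only [bTerm_eq_expSum, ramanujanSum_apply, Nat.totient_mul hqt, MonoidHom.mul_apply,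
    DirichletCharacter.natHom_apply, DirichletCharacter.conjNatHom_apply]
  push_cast
  ring

end bTerm

theorem bTerm_multiple_general {r₁ r₂ : ℕ} (χ₁ : DirichletCharacter ℂ r₁)
    (χ₂ : DirichletCharacter ℂ r₂)
    (m : ℤ) (t : ℕ)
    (hb : bTerm χ₁ χ₂ m (Nat.lcm r₁ r₂ * t) ≠ 0) :
    Squarefree t ∧ Nat.Coprime t (Nat.lcm r₁ r₂) ∧
      bTerm χ₁ χ₂ m (Nat.lcm r₁ r₂ * t) =
        bTerm χ₁ χ₂ m (Nat.lcm r₁ r₂) *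
          ((ArithmeticFunction.moebius
              (∏ p ∈ t.primeFactors.filter (fun p : ℕ => ¬ ((p : ℤ) ∣ m)), p) : ℤ) : ℂ) /
          (((Nat.totient (∏ p ∈ t.primeFactors.filter (fun p : ℕ => ¬ ((p : ℤ) ∣ m)), p) : ℂ)) ^ 2 *
            (Nat.totient (∏ p ∈ t.primeFactors.filter (fun p : ℕ => (p : ℤ) ∣ m), p) : ℂ)) := by
  set q₀ := Nat.lcm r₁ r₂
  have hr₁ : r₁ ∣ q₀ := Nat.dvd_lcm_left r₁ r₂
  have hsq : ∀ p, p.Prime → p ∣ t → ¬ p * p ∣ q₀ * t := by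
    rintro p hp ⟨u, rfl⟩ hpp
    rw [show q₀ * (p * u) = q₀ * u * p by ring] at hpp hb
    exact hb (bTerm_mul_prime_eq_zero χ₁ χ₂ m hp (Nat.dvd_of_mul_dvd_mul_right hp.pos hpp)
      (hr₁.trans (dvd_mul_right _ _)))
  have hsf : Squarefree t := Nat.squarefree_iff_prime_squarefree.mpr fun p hp hpp =>
    hsq p hp (dvd_of_mul_left_dvd hpp) (hpp.mul_left q₀)
  have hcop : t.Coprime q₀ := Nat.coprime_of_dvd fun p hp hpt hpq =>
    hsq p hp hpt (mul_dvd_mul hpq hpt)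
  refine ⟨hsf, hcop, ?_⟩
  set H := ∏ p ∈ t.primeFactors.filter (fun p : ℕ => (p : ℤ) ∣ m), p
  set K := ∏ p ∈ t.primeFactors.filter (fun p : ℕ => ¬ (p : ℤ) ∣ m), p
  have hRm : ramanujanSum (-m) t = H.totient * ArithmeticFunction.moebius K := by
    simpa only [Int.dvd_neg] using ramanujanSum_of_squarefree hsf (-m)
  have hφ : H.totient * K.totient = t.totient := totient_mul_totient_of_squarefree hsf _
  have hH : (H.totient : ℂ) ≠ 0 := by
    refine Nat.cast_ne_zero.mpr (Nat.totient_pos.mpr (Nat.pos_of_ne_zero ?_)).ne'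
    exact prod_ne_zero_iff.mpr fun p hp =>
      (Nat.prime_of_mem_primeFactors (mem_filter.mp hp).1).ne_zero
  have hμ : (ArithmeticFunction.moebius t : ℂ) ^ 2 = 1 := by
    exact_mod_cast ArithmeticFunction.moebius_sq_eq_one_of_squarefree hsf
  rw [bTerm_mul_of_coprime χ₁ χ₂ m hr₁ (Nat.dvd_lcm_right r₁ r₂) hcop.symm,
    ramanujanSum_one_of_squarefree hsf, hμ, hRm, ← hφ]
  push_cast
  field_simp

/-- If b(q₀t) ≠ 0 for some positive integer t (q₀ = [r₁,r₂]), then t is squarefree,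
(t,q₀) = 1, and writing t = hk with h the product of primes of t dividing m and k
the product of the primes of t not dividing m, b(q₀t) = b(q₀)·μ(k)/(φ(k)²·φ(h)). -/
theorem bTerm_multiple {r₁ r₂ : ℕ} (χ₁ : DirichletCharacter ℂ r₁)
    (χ₂ : DirichletCharacter ℂ r₂) (h₁ : χ₁.IsPrimitive) (h₂ : χ₂.IsPrimitive)
    (m : ℤ) (t : ℕ) (ht : 0 < t)
    (hb : bTerm χ₁ χ₂ m (Nat.lcm r₁ r₂ * t) ≠ 0) :
    Squarefree t ∧ Nat.Coprime t (Nat.lcm r₁ r₂) ∧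
      bTerm χ₁ χ₂ m (Nat.lcm r₁ r₂ * t) =
        bTerm χ₁ χ₂ m (Nat.lcm r₁ r₂) *
          ((ArithmeticFunction.moebius
              (∏ p ∈ t.primeFactors.filter (fun p : ℕ => ¬ ((p : ℤ) ∣ m)), p) : ℤ) : ℂ) /
          (((Nat.totient (∏ p ∈ t.primeFactors.filter (fun p : ℕ => ¬ ((p : ℤ) ∣ m)), p) : ℂ)) ^ 2 *
            (Nat.totient (∏ p ∈ t.primeFactors.filter (fun p : ℕ => (p : ℤ) ∣ m), p) : ℂ)) :=
  bTerm_multiple_general χ₁ χ₂ m t hb
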